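/- arXiv:2201.01124 — 3 statements merged into one kernel-verified Lean document; each statement's English description precedes it below -/
import Mathlib

section
/- For every real x, cos x = Π_{n=1}^∞ (1 - x²/((2n-1)π/2)²), i.e. the cosine function has the infinite product representation over odd integers. -/
/-!
Splitting the partial products of Euler's sine product for `sin (2x)` into even and odd factors
gives `sin (2x) = P(x) * 2 sin x`, where `P` is the product over the odd multiples of `π / 2`.
Hence `P = cos` off the zeros of `sin`, which are countable, and everywhere since `P` is
continuous, the product converging locally uniformly.
-/

open Real Filter Finset Topology

lemma Finset.prod_range_two_mul {M : Type*} [CommMonoid M] (f : ℕ → M) (n : ℕ) :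
    ∏ j ∈ range (2 * n), f j = (∏ i ∈ range n, f (2 * i)) * ∏ i ∈ range n, f (2 * i + 1) := by
  induction n with
  | zero => simp
  | succ n ih =>
    rw [Nat.mul_succ, prod_range_succ, prod_range_succ, ih, prod_range_succ, prod_range_succ]
    ac_rfl

section OneSubSqDiv

variable {c : ℕ → ℝ}

lemma multipliable_one_sub_sq_div (hc : Summable fun n => (c n ^ 2)⁻¹) (x : ℝ) :
    Multipliable fun n => 1 - x ^ 2 / c n ^ 2 := by
  simpa only [div_eq_mul_inv, sub_eq_add_neg] using
    Real.multipliable_one_add_of_summable (hc.mul_left (x ^ 2)).neg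

lemma continuous_tprod_one_sub_sq_div (hc : Summable fun n => (c n ^ 2)⁻¹) :
    Continuous fun x : ℝ => ∏' n, (1 - x ^ 2 / c n ^ 2) := by
  have hloc : HasProdLocallyUniformlyOn (fun n x => 1 + -(x ^ 2 / c n ^ 2))
      (fun x => ∏' n, (1 + -(x ^ 2 / c n ^ 2))) Set.univ := by
    refine hasProdLocallyUniformlyOn_of_forall_compact isOpen_univ fun K _ hK => ?_
    obtain ⟨R, hR⟩ := hK.isBounded.exists_norm_le
    refine Summable.hasProdUniformlyOn_nat_one_add hK (hc.mul_left (R ^ 2))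
      (Eventually.of_forall fun n x hx => ?_) fun n => by fun_prop
    rw [norm_neg, norm_div, norm_pow, norm_pow, div_eq_mul_inv, Real.norm_eq_abs (c n),
      ← sq_abs (c n)]
    gcongr
    exact hR x hx
  simpa only [sub_eq_add_neg, continuousOn_univ] using
    hloc.continuousOn (Eventually.of_forall fun s => by fun_prop).frequently

end OneSubSqDiv

lemma summable_inv_sq_odd_mul_pi_div_two :
    Summable fun n : ℕ => (((2 * (n : ℝ) + 1) * π / 2) ^ 2)⁻¹ := by
  refine (summable_nat_add_iff 1 |>.mpr <| summable_nat_pow_inv.mpr one_lt_two).of_nonneg_of_le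
    (fun n => by positivity) fun n => ?_
  have : (n : ℝ) + 1 ≤ (2 * n + 1) * π / 2 := by
    nlinarith [pi_gt_three, (n.cast_nonneg : (0 : ℝ) ≤ n)]
  push_cast
  gcongr

lemma tendsto_mul_prod_one_sub_sq_div_sq_mul_pi (x : ℝ) :
    Tendsto (fun n : ℕ => x * ∏ j ∈ range n, (1 - x ^ 2 / (((j : ℝ) + 1) * π) ^ 2))
      atTop (𝓝 (sin x)) := by
  have h := Real.tendsto_euler_sin_prod (x / π)
  rw [mul_div_cancel₀ x pi_ne_zero] at h
  refine h.congr fun n => ?_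
  congr 1
  refine prod_congr rfl fun j _ => ?_
  rw [div_pow, div_div, mul_comm, mul_pow]

lemma mul_prod_range_two_mul_eq (x : ℝ) (n : ℕ) :
    2 * x * ∏ j ∈ range (2 * n), (1 - (2 * x) ^ 2 / (((j : ℝ) + 1) * π) ^ 2) =
      (∏ i ∈ range n, (1 - x ^ 2 / ((2 * (i : ℝ) + 1) * π / 2) ^ 2)) *
        (2 * (x * ∏ i ∈ range n, (1 - x ^ 2 / (((i : ℝ) + 1) * π) ^ 2))) := by
  rw [prod_range_two_mul]
  have heven (i : ℕ) : (2 * x) ^ 2 / ((((2 * i : ℕ) : ℝ) + 1) * π) ^ 2 =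
      x ^ 2 / ((2 * (i : ℝ) + 1) * π / 2) ^ 2 := by
    push_cast
    field_simp
  have hodd (i : ℕ) : (2 * x) ^ 2 / ((((2 * i + 1 : ℕ) : ℝ) + 1) * π) ^ 2 =
      x ^ 2 / (((i : ℝ) + 1) * π) ^ 2 := by
    push_cast
    field_simp
    ring
  simp only [heven, hodd]
  ring

lemma tprod_one_sub_sq_div_odd_mul_pi_div_two_mul_sin (x : ℝ) :
    (∏' n : ℕ, (1 - x ^ 2 / ((2 * (n : ℝ) + 1) * π / 2) ^ 2)) * sin x = cos x * sin x := by
  have hmul : Multipliable fun n : ℕ => 1 - x ^ 2 / ((2 * (n : ℝ) + 1) * π / 2) ^ 2 :=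
    multipliable_one_sub_sq_div summable_inv_sq_odd_mul_pi_div_two x
  have hsin_two_mul := (tendsto_mul_prod_one_sub_sq_div_sq_mul_pi (2 * x)).comp
    (tendsto_id.const_mul_atTop' two_pos)
  have hprod_mul_sin := hmul.hasProd.tendsto_prod_nat.mul
    ((tendsto_mul_prod_one_sub_sq_div_sq_mul_pi x).const_mul 2)
  have h := tendsto_nhds_unique
    (hprod_mul_sin.congr fun n => (mul_prod_range_two_mul_eq x n).symm) hsin_two_mul
  rw [sin_two_mul] at h
  linear_combination h / 2

lemma dense_setOf_sin_ne_zero : Dense {x : ℝ | sin x ≠ 0} :=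
  ((Set.countable_range fun k : ℤ => (k : ℝ) * π).mono
    fun _ hx => sin_eq_zero_iff.mp hx).dense_compl ℝ

lemma tprod_one_sub_sq_div_odd_mul_pi_div_two (x : ℝ) :
    ∏' n : ℕ, (1 - x ^ 2 / ((2 * (n : ℝ) + 1) * π / 2) ^ 2) = cos x :=
  congrFun ((continuous_tprod_one_sub_sq_div summable_inv_sq_odd_mul_pi_div_two).ext_on
    dense_setOf_sin_ne_zero continuous_cos
    fun y hy => mul_right_cancel₀ hy (tprod_one_sub_sq_div_odd_mul_pi_div_two_mul_sin y)) x

theorem cos_infinite_product (x : ℝ) :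
    HasProd (fun n : ℕ => 1 - x ^ 2 / ((2 * (n : ℝ) + 1) * π / 2) ^ 2) (Real.cos x) := by
  rw [← tprod_one_sub_sq_div_odd_mul_pi_div_two x]
  exact (multipliable_one_sub_sq_div summable_inv_sq_odd_mul_pi_div_two x).hasProd
end

section
/- ∫₀^{π/2} log(cos(θ/2)) dθ = -(π/2)·log 2 + G, where G = Σ_{n=0}^∞ (-1)^n/(2n+1)² is Catalan's constant. -/
/-!
For `|x| < 1` the Taylor series of `log (1 + z)` at `z = x e^{iθ}` gives the Fourier expansion
`log ‖1 + x e^{iθ}‖ = ∑ (-1)^(n+1) xⁿ cos (nθ) / n`, which converges geometrically and can be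
integrated termwise over `[0, π/2]`; the resulting coefficients are `O(1/n²)` and vanish for even
`n`. Letting `x → 1⁻`, Abel's theorem handles the series, and dominated convergence the integral,
since `1 ≤ ‖1 + x e^{iθ}‖ ≤ 2` there. Finally `‖1 + e^{iθ}‖ = 2 cos (θ/2)`.
-/

open Real Filter Topology MeasureTheory
open Complex (I)

lemma hasSum_log_norm_one_add {z : ℂ} (hz : ‖z‖ < 1) :
    HasSum (fun n : ℕ => (-1) ^ (n + 1) * (z ^ n).re / n) (Real.log ‖1 + z‖) := by
  rw [← Complex.log_re]
  convert Complex.hasSum_re (Complex.hasSum_taylorSeries_log hz) using 2 with n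
  rw [show (-1 : ℂ) ^ (n + 1) * z ^ n / n = (((-1 : ℝ) ^ (n + 1) / n : ℝ) : ℂ) * z ^ n by
    push_cast; ring, Complex.re_ofReal_mul]
  ring

lemma hasSum_log_norm_one_add_mul_exp {x : ℝ} (hx : |x| < 1) (θ : ℝ) :
    HasSum (fun n : ℕ => (-1) ^ (n + 1) * x ^ n * (Real.cos (n * θ) / n))
      (Real.log ‖1 + x * Complex.exp (θ * I)‖) := by
  have hz : ‖(x : ℂ) * Complex.exp (θ * I)‖ < 1 := by
    rwa [norm_mul, Complex.norm_exp_ofReal_mul_I, mul_one, Complex.norm_real]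
  convert hasSum_log_norm_one_add hz using 2 with n
  rw [mul_pow, ← Complex.exp_nat_mul, ← Complex.ofReal_pow,
    show (n : ℂ) * (θ * I) = ((n * θ : ℝ) : ℂ) * I by push_cast; ring,
    Complex.re_ofReal_mul, Complex.exp_ofReal_mul_I_re]
  ring

/-- `∫₀^{π/2} (-1)^(n+1) cos (nθ) / n dθ`, the integral of the `n`-th term of the expansion. -/
noncomputable def logCosCoeff (n : ℕ) : ℝ := (-1) ^ (n + 1) * Real.sin (n * (π / 2)) / n ^ 2

lemma integral_cos_nat_mul_div (n : ℕ) :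
    ∫ θ in (0 : ℝ)..π / 2, Real.cos (n * θ) / n = Real.sin (n * (π / 2)) / n ^ 2 := by
  rcases eq_or_ne n 0 with rfl | hn
  · simp
  have hn' : (n : ℝ) ≠ 0 := Nat.cast_ne_zero.mpr hn
  rw [intervalIntegral.integral_div,
    intervalIntegral.integral_comp_mul_left (fun θ => Real.cos θ) hn', integral_cos, mul_zero,
    Real.sin_zero, sub_zero, smul_eq_mul]
  field_simp

lemma hasSum_integral_log_norm_one_add_mul_exp {x : ℝ} (hx : |x| < 1) :
    HasSum (fun n => logCosCoeff n * x ^ n)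
      (∫ θ in (0 : ℝ)..π / 2, Real.log ‖1 + x * Complex.exp (θ * I)‖) := by
  have hterm (n : ℕ) : ∫ θ in (0 : ℝ)..π / 2, (-1) ^ (n + 1) * x ^ n * (Real.cos (n * θ) / n)
      = logCosCoeff n * x ^ n := by
    rw [intervalIntegral.integral_const_mul, integral_cos_nat_mul_div, logCosCoeff]
    ring
  have hbound (n : ℕ) (θ : ℝ) :
      ‖(-1) ^ (n + 1) * x ^ n * (Real.cos (n * θ) / n)‖ ≤ |x| ^ n := by
    rcases eq_or_ne n 0 with rfl | hn
    · simp
    rw [norm_mul, norm_mul, norm_pow, norm_pow, norm_neg, norm_one, one_pow, one_mul,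
      Real.norm_eq_abs]
    refine mul_le_of_le_one_right (by positivity) ?_
    rw [norm_div, Real.norm_eq_abs, RCLike.norm_natCast]
    exact div_le_one_of_le₀
      ((abs_cos_le_one _).trans (by exact_mod_cast Nat.one_le_iff_ne_zero.mpr hn)) (by positivity)
  simpa only [hterm] using
    intervalIntegral.hasSum_integral_of_dominated_convergence (a := 0) (b := π / 2) (μ := volume)
      (fun (n : ℕ) _ => |x| ^ n)
      (fun n => (by fun_prop : Continuous fun θ : ℝ =>
        (-1) ^ (n + 1) * x ^ n * (Real.cos (n * θ) / n)).aestronglyMeasurable)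
      (fun n => ae_of_all _ fun θ _ => hbound n θ)
      (ae_of_all _ fun _ _ => summable_geometric_of_lt_one (abs_nonneg x) hx)
      intervalIntegrable_const
      (ae_of_all _ fun θ _ => hasSum_log_norm_one_add_mul_exp hx θ)

lemma one_le_norm_one_add_mul_exp {x θ : ℝ} (hx : 0 ≤ x) (hθ : 0 ≤ Real.cos θ) :
    1 ≤ ‖1 + x * Complex.exp (θ * I)‖ := by
  refine le_trans ?_ (Complex.re_le_norm _)
  simp only [Complex.add_re, Complex.one_re, Complex.re_ofReal_mul, Complex.exp_ofReal_mul_I_re]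
  nlinarith

lemma abs_log_norm_one_add_mul_exp_le {x θ : ℝ} (hx : x ∈ Set.Icc (0 : ℝ) 1)
    (hθ : 0 ≤ Real.cos θ) : |Real.log ‖1 + x * Complex.exp (θ * I)‖| ≤ Real.log 2 := by
  have hlow := one_le_norm_one_add_mul_exp hx.1 hθ
  have hup : ‖1 + x * Complex.exp (θ * I)‖ ≤ 2 :=
    calc _ ≤ ‖(1 : ℂ)‖ + ‖x * Complex.exp (θ * I)‖ := norm_add_le _ _
      _ ≤ 2 := by
        rw [norm_one, norm_mul, Complex.norm_exp_ofReal_mul_I, Complex.norm_real,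
          Real.norm_of_nonneg hx.1]
        linarith [hx.2]
  rw [abs_of_nonneg (Real.log_nonneg hlow)]
  exact Real.log_le_log (by linarith) hup

lemma tendsto_integral_log_norm_one_add_mul_exp :
    Tendsto (fun x : ℝ => ∫ θ in (0 : ℝ)..π / 2, Real.log ‖1 + x * Complex.exp (θ * I)‖)
      (𝓝[<] 1) (𝓝 (∫ θ in (0 : ℝ)..π / 2, Real.log ‖1 + Complex.exp (θ * I)‖)) := by
  have hcos {θ : ℝ} (hθ : θ ∈ Set.uIoc 0 (π / 2)) : 0 ≤ Real.cos θ := by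
    rw [Set.uIoc_of_le (by positivity)] at hθ
    exact Real.cos_nonneg_of_mem_Icc ⟨by linarith [hθ.1, pi_pos], hθ.2⟩
  refine intervalIntegral.tendsto_integral_filter_of_dominated_convergence (fun _ => Real.log 2)
    (.of_forall fun x => (by fun_prop : Measurable fun θ : ℝ =>
      Real.log ‖1 + x * Complex.exp (θ * I)‖).aestronglyMeasurable) ?_
    intervalIntegrable_const (ae_of_all _ fun θ hθ => ?_)
  · filter_upwards [Ioo_mem_nhdsLT zero_lt_one] with x hx
    exact ae_of_all _ fun θ hθ =>
      abs_log_norm_one_add_mul_exp_le (Set.Ioo_subset_Icc_self hx) (hcos hθ)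
  · have hne : ‖1 + ((1 : ℝ) : ℂ) * Complex.exp (θ * I)‖ ≠ 0 :=
      (zero_lt_one.trans_le (one_le_norm_one_add_mul_exp zero_le_one (hcos hθ))).ne'
    have hcont : ContinuousAt (fun x : ℝ => Real.log ‖1 + x * Complex.exp (θ * I)‖) 1 :=
      ContinuousAt.log (by fun_prop) hne
    simpa using hcont.tendsto.mono_left nhdsWithin_le_nhds

lemma summable_logCosCoeff : Summable logCosCoeff := by
  refine (Real.summable_one_div_nat_pow.mpr one_lt_two).of_norm_bounded fun n => ?_
  rw [logCosCoeff, norm_div, norm_mul, norm_pow, norm_neg, norm_one, one_pow, one_mul,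
    Real.norm_eq_abs, norm_pow, Real.norm_natCast]
  exact div_le_div_of_nonneg_right (abs_sin_le_one _) (by positivity)

lemma logCosCoeff_two_mul (m : ℕ) : logCosCoeff (2 * m) = 0 := by
  rw [logCosCoeff, show ((2 * m : ℕ) : ℝ) * (π / 2) = m * π by push_cast; ring, sin_nat_mul_pi,
    mul_zero, zero_div]

lemma logCosCoeff_two_mul_add_one (k : ℕ) :
    logCosCoeff (2 * k + 1) = (-1) ^ k / (2 * k + 1) ^ 2 := by
  rw [logCosCoeff, show ((2 * k + 1 : ℕ) : ℝ) * (π / 2) = π / 2 + k * π by push_cast; ring,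
    sin_add_nat_mul_pi, sin_pi_div_two, mul_one, Even.neg_one_pow ⟨k + 1, by ring⟩, one_mul]
  push_cast
  ring

lemma tsum_logCosCoeff :
    ∑' n, logCosCoeff n = ∑' k : ℕ, (-1 : ℝ) ^ k / (2 * (k : ℝ) + 1) ^ 2 := by
  have hodd : Function.Injective (fun k : ℕ => 2 * k + 1) := fun a b h => by simp only at h; omega
  have hsupp : Function.support logCosCoeff ⊆ Set.range (fun k : ℕ => 2 * k + 1) := by
    intro n hn
    obtain ⟨k, rfl | rfl⟩ := Nat.even_or_odd' n
    · exact absurd (logCosCoeff_two_mul k) hn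
    · exact ⟨k, rfl⟩
  rw [← hodd.tsum_eq hsupp]
  exact tsum_congr logCosCoeff_two_mul_add_one

lemma integral_log_norm_one_add_exp :
    ∫ θ in (0 : ℝ)..π / 2, Real.log ‖1 + Complex.exp (θ * I)‖ = ∑' n, logCosCoeff n := by
  refine tendsto_nhds_unique tendsto_integral_log_norm_one_add_mul_exp
    ((Real.tendsto_tsum_powerSeries_nhdsWithin_lt
      summable_logCosCoeff.hasSum.tendsto_sum_nat).congr' ?_)
  filter_upwards [Ioo_mem_nhdsLT (show (-1 : ℝ) < 1 by norm_num)] with x hx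
  exact (hasSum_integral_log_norm_one_add_mul_exp (abs_lt.mpr hx)).tsum_eq

lemma norm_one_add_exp_mul_I (θ : ℝ) :
    ‖1 + Complex.exp (θ * I)‖ = 2 * |Real.cos (θ / 2)| := by
  have h : 1 + Complex.exp (θ * I)
      = Complex.exp ((θ / 2 : ℝ) * I) * (2 * Real.cos (θ / 2) : ℝ) := by
    push_cast
    rw [Complex.two_cos, mul_add, ← Complex.exp_add, ← Complex.exp_add]
    ring_nf
    simp [add_comm]
  rw [h, norm_mul, Complex.norm_exp_ofReal_mul_I, one_mul, Complex.norm_real, Real.norm_eq_abs,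
    abs_mul, abs_two]

theorem integral_log_cos_half :
    ∫ θ in (0 : ℝ)..(π / 2), Real.log (Real.cos (θ / 2))
      = -(π / 2) * Real.log 2 + ∑' n : ℕ, (-1 : ℝ) ^ n / (2 * (n : ℝ) + 1) ^ 2 := by
  have hcos {θ : ℝ} (hθ : θ ∈ Set.uIcc 0 (π / 2)) : 0 < Real.cos (θ / 2) := by
    rw [Set.uIcc_of_le (by positivity)] at hθ
    exact cos_pos_of_mem_Ioo ⟨by linarith [hθ.1, pi_pos], by linarith [hθ.2, pi_pos]⟩
  have hnorm {θ : ℝ} (hθ : θ ∈ Set.uIcc 0 (π / 2)) :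
      ‖1 + Complex.exp (θ * I)‖ = 2 * Real.cos (θ / 2) := by
    rw [norm_one_add_exp_mul_I, abs_of_pos (hcos hθ)]
  have hsplit : Set.EqOn (fun θ : ℝ => Real.log (Real.cos (θ / 2)))
      (fun θ : ℝ => Real.log ‖1 + Complex.exp (θ * I)‖ - Real.log 2) (Set.uIcc 0 (π / 2)) :=
    fun θ hθ => by
      simp only [hnorm hθ, Real.log_mul two_ne_zero (hcos hθ).ne']
      ring
  have hint : IntervalIntegrable (fun θ : ℝ => Real.log ‖1 + Complex.exp (θ * I)‖)
      volume 0 (π / 2) :=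
    (ContinuousOn.log (by fun_prop) fun θ hθ => by
      rw [hnorm hθ]; exact (mul_pos two_pos (hcos hθ)).ne').intervalIntegrable
  rw [intervalIntegral.integral_congr hsplit,
    intervalIntegral.integral_sub hint intervalIntegrable_const, integral_log_norm_one_add_exp,
    tsum_logCosCoeff, intervalIntegral.integral_const, smul_eq_mul]
  ring
end

section
/- For every positive odd integer N and real x, N·tan(N x) = Σ_{a=0}^{N-1} tan(x + 2πa/N), whenever all terms are defined. -/
/-!
For odd `N`, `2 cos (z + 2πa/N) = ω^a (e^{-iz} + μ^a e^{iz})` with `ω = e^{-2πi/N}` and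
`μ = ω⁻² = e^{4πi/N}`, a primitive `N`-th root of unity because `N` is odd. Oddness also makes
`∏ ω^a = ω^{N(N-1)/2} = 1`, and `∏ (x + μ^a y) = x^N + y^N`, so the product of the
`2 cos (z + 2πa/N)` is `2 cos (N z)`. Taking logarithmic derivatives of this identity gives the
formula, since the logarithmic derivative of `cos` is `-tan`.
-/

open Real

open Finset Polynomial in
theorem IsPrimitiveRoot.pow_add_pow_eq_prod_range_add_mul {R : Type*} [CommRing R] [IsDomain R]
    {ζ : R} {n : ℕ} (hζ : IsPrimitiveRoot ζ n) (hn : Odd n) (x y : R) :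
    x ^ n + y ^ n = ∏ i ∈ range n, (x + ζ ^ i * y) := by
  simpa [eval_prod, mul_neg] using
    congrArg (eval x) (X_pow_sub_C_eq_prod hζ hn.pos (hn.neg_pow y))

theorem Finset.prod_range_pow_eq_one_of_odd {M : Type*} [CommMonoid M] {w : M} {n : ℕ}
    (hn : Odd n) (hw : w ^ n = 1) : ∏ i ∈ range n, w ^ i = 1 := by
  obtain ⟨k, rfl⟩ := hn
  have hsum : ∑ i ∈ range (2 * k + 1), i = (2 * k + 1) * k := by
    have := sum_range_id_mul_two (2 * k + 1)
    simp only [Nat.add_sub_cancel] at this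
    linarith
  rw [prod_pow_eq_pow_sum, hsum, pow_mul, hw, one_pow]

open Complex in
theorem Complex.prod_range_two_mul_cos_add (N : ℕ) (hN : Odd N) (z : ℂ) :
    ∏ a ∈ Finset.range N, 2 * cos (z + 2 * π * a / N) = 2 * cos (N * z) := by
  have hN0 : (N : ℂ) ≠ 0 := Nat.cast_ne_zero.mpr hN.pos.ne'
  set ω := exp (-(2 * π * I / N))
  set μ := exp (2 * π * I * (2 / N))
  have hμ : IsPrimitiveRoot μ N :=
    isPrimitiveRoot_exp_of_coprime 2 N hN.pos.ne' (Nat.coprime_two_left.mpr hN)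
  have hω : ω ^ N = 1 := by
    rw [← exp_nat_mul, exp_eq_one_iff]
    exact ⟨-1, by field_simp; push_cast; ring⟩
  have factor (a : ℕ) :
      2 * cos (z + 2 * π * a / N) = ω ^ a * (exp (-(z * I)) + μ ^ a * exp (z * I)) := by
    rw [two_cos, add_comm, ← exp_nat_mul, ← exp_nat_mul, mul_add, ← exp_add, ← mul_assoc,
      ← exp_add, ← exp_add]
    congr 2 <;> field_simp <;> ring
  rw [Finset.prod_congr rfl fun a _ => factor a, Finset.prod_mul_distrib,
    Finset.prod_range_pow_eq_one_of_odd hN hω, one_mul,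
    ← hμ.pow_add_pow_eq_prod_range_add_mul hN, ← exp_nat_mul, ← exp_nat_mul, two_cos, add_comm]
  congr 2 <;> ring

theorem Real.prod_range_two_mul_cos_add (N : ℕ) (hN : Odd N) (x : ℝ) :
    ∏ a ∈ Finset.range N, 2 * cos (x + 2 * π * a / N) = 2 * cos (N * x) := by
  exact_mod_cast Complex.prod_range_two_mul_cos_add N hN x

theorem Real.logDeriv_cos_comp {g : ℝ → ℝ} {x : ℝ} (hg : DifferentiableAt ℝ g x) :
    logDeriv (fun y => cos (g y)) x = -tan (g x) * deriv g x := by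
  rw [← Function.comp_def, logDeriv_comp differentiableAt_cos hg, logDeriv_cos, Pi.neg_apply]

theorem tan_multiplication_general (N : ℕ) (hodd : Odd N) (x : ℝ)
    (h' : ∀ a ∈ Finset.range N, Real.cos (x + 2 * π * a / N) ≠ 0) :
    (N : ℝ) * Real.tan (N * x) = ∑ a ∈ Finset.range N, Real.tan (x + 2 * π * a / N) := by
  have hlog_multiple : logDeriv (fun y => 2 * cos (N * y)) x = -(N * tan (N * x)) := by
    rw [logDeriv_const_mul x 2 two_ne_zero, logDeriv_cos_comp (by fun_prop),
      deriv_const_mul_id']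
    ring
  have hlog_factor (c : ℝ) : logDeriv (fun y => 2 * cos (y + c)) x = -tan (x + c) := by
    rw [logDeriv_const_mul x 2 two_ne_zero, logDeriv_cos_comp (by fun_prop), deriv_add_const,
      deriv_id'']
    ring
  have hprod : logDeriv (fun y => ∏ a ∈ Finset.range N, 2 * cos (y + 2 * π * a / N)) x =
      ∑ a ∈ Finset.range N, logDeriv (fun y => 2 * cos (y + 2 * π * a / N)) x :=
    logDeriv_prod (fun a ha => mul_ne_zero two_ne_zero (h' a ha)) (fun a _ => by fun_prop)
  simp_rw [prod_range_two_mul_cos_add N hodd, hlog_multiple, hlog_factor,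
    Finset.sum_neg_distrib] at hprod
  exact neg_inj.mp hprod

theorem tan_multiplication (N : ℕ) (hN : 0 < N) (hodd : Odd N) (x : ℝ)
    (h : Real.cos (N * x) ≠ 0)
    (h' : ∀ a ∈ Finset.range N, Real.cos (x + 2 * π * a / N) ≠ 0) :
    (N : ℝ) * Real.tan (N * x) = ∑ a ∈ Finset.range N, Real.tan (x + 2 * π * a / N) :=
  tan_multiplication_general N hodd x h'
end
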